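/- Let b be a prime, m, s, d, τ ∈ ℕ with τ + 1 ≤ ds, α ≥ 1 an integer, p ∈ F_b[x] irreducible with deg(p) = m, γ = (γ_w) nonnegative weights, λ a real with 1/(2min(α,d)+1) < λ ≤ 1, and q_τ = (q_1,...,q_τ) ∈ R_{b,m}^τ. For q̃ ∈ R_{b,m} define θ(q̃) = Σ_{u⊆{1,...,τ}} 4^{|v(u∪{τ+1})| max(d-α,0)} γ_{v(u∪{τ+1})} Σ over all ((k_j)_{j∈u}, k_{τ+1}) ∈ ℕ^u × ℕ with Σ_{j∈u} tr_m(k_j) q_j + tr_m(k_{τ+1}) q̃ ≡ 0 (mod p) of [Π_{j∈u} r_{α,d}(k_j)] · r_{α,d}(k_{τ+1}). Then there exists q̃ ∈ R_{b,m} such that θ(q̃)^λ ≤ (1/(b^m - 1)) Σ_{u⊆{1,...,τ}} 4^{λ|v(u∪{τ+1})| max(d-α,0)} γ_{v(u∪{τ+1})}^λ C̃_{α,d,λ}^{|u|+1}. -/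

import Mathlib

open scoped Classical
open Polynomial

noncomputable section

namespace ISPLR

/-- `digit b k i` is the `i`-th base-`b` digit of `k`. -/
def digit (b k i : ℕ) : ℕ := k / b ^ i % b

/-- `trunc b m k` is the truncated polynomial `tr_m(k) ∈ F_b[x]`. -/
def trunc (b m k : ℕ) : Polynomial (ZMod b) :=
  ∑ i ∈ Finset.range m, Polynomial.C ((digit b k i : ZMod b)) * Polynomial.X ^ i

/-- `mu b k = ⌊log_b k⌋` for `k ≥ 1`. -/
def mu (b k : ℕ) : ℕ := Nat.log b k

/-- `r_{α,d}(k)`. -/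
def rfun (b α d k : ℕ) : ℝ :=
  if k = 0 then 1 else (b : ℝ) ^ (-(((2 * min α d + 1) * mu b k : ℕ) : ℤ))

/-- `blk d u = v(u)`: the set of coordinates `i` whose block `{(i-1)d+1,...,id}` meets `u`. -/
def blk (d : ℕ) (u : Finset ℕ) : Finset ℕ := u.image fun j => (j - 1) / d + 1

/-- The quality criterion `B_{α,d,γ}((q_1,...,q_τ), p)`. -/
def Bcrit (b α d m : ℕ) (γ : Finset ℕ → ℝ) (p : Polynomial (ZMod b))
    (τ : ℕ) (q : ℕ → Polynomial (ZMod b)) : ℝ :=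
  ∑ u ∈ (Finset.Icc 1 τ).powerset.filter fun u => u ≠ ∅,
    (4 : ℝ) ^ ((blk d u).card * (d - α)) * γ (blk d u) *
      ∑' k : ↥u → ℕ,
        (if (∀ j, 1 ≤ k j) ∧ p ∣ ∑ j, trunc b m (k j) * q (j : ℕ)
         then ∏ j, rfun b α d (k j) else 0)

/-- Membership in `R_{b,m}`: nonzero polynomials of degree `< m`. -/
def Rbm (b m : ℕ) (q : Polynomial (ZMod b)) : Prop :=
  q ≠ 0 ∧ q.degree < (m : WithBot ℕ)

/-- `R_{b,m}` as a finset. -/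
def Rfin (b m : ℕ) : Finset (Polynomial (ZMod b)) :=
  ((Finset.range (b ^ m)).filter fun n => n ≠ 0).image (trunc b m)

/-- The CBC construction: `q 1 = 1`, every component lies in `R_{b,m}`, and each `q τ`
minimizes the quality criterion given the previous components. -/
def CBC (b α d m ds : ℕ) (γ : Finset ℕ → ℝ) (p : Polynomial (ZMod b))
    (q : ℕ → Polynomial (ZMod b)) : Prop :=
  q 1 = 1 ∧ (∀ τ, 1 ≤ τ → τ ≤ ds → Rbm b m (q τ)) ∧
    ∀ τ, 2 ≤ τ → τ ≤ ds → ∀ q' : Polynomial (ZMod b), Rbm b m q' →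
      Bcrit b α d m γ p τ q ≤ Bcrit b α d m γ p τ (Function.update q τ q')

/-- `C̃_{α,d,λ}`. -/
def Ctilde (b α d : ℕ) (lam : ℝ) : ℝ :=
  max ((((b : ℝ) - 1) / (1 - (b : ℝ) ^ (-(2 * ((min α d : ℕ) : ℤ))))) ^ lam)
      (((b : ℝ) - 1) / (1 - (b : ℝ) ^ ((1 : ℝ) - (2 * ((min α d : ℕ) : ℝ) + 1) * lam)))

/-- `C_{α,d,λ,a}`. -/
def Cconst (b α d : ℕ) (lam : ℝ) (a : ℕ) : ℝ :=
  (4 : ℝ) ^ (lam * ((d - α : ℕ) : ℝ)) * (-1 + (1 + Ctilde b α d lam) ^ a)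

/-- `φ_{α,d}(z)`. -/
def phi (b α d : ℕ) (z : ℝ) : ℝ :=
  if z = 0 then ((b : ℝ) - 1) / (1 - (b : ℝ) ^ (-(2 * ((min α d : ℕ) : ℤ))))
  else ((b : ℝ) - 1 - (b : ℝ) ^ (2 * ((min α d : ℕ) : ℤ) * ⌊Real.logb b z⌋) *
      ((b : ℝ) ^ (2 * min α d + 1) - 1)) /
    (1 - (b : ℝ) ^ (-(2 * ((min α d : ℕ) : ℤ))))

/-- The `l`-th coefficient `t_l` of the Laurent expansion `g/p = Σ_{l} t_l x^{-l}`
(for `l ≥ 1`; the coefficients with `l ≥ 1` only depend on `g % p`, and are obtained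
as power-series coefficients after the substitution `y = x^{-1}`). -/
def lcoeff (b : ℕ) [Fact (Nat.Prime b)] (m : ℕ) (p g : Polynomial (ZMod b)) (l : ℕ) : ZMod b :=
  PowerSeries.coeff (R := ZMod b) l
    (PowerSeries.X * (((g % p).reflect (m - 1) : Polynomial (ZMod b)) : PowerSeries (ZMod b)) *
      (((p.reflect m : Polynomial (ZMod b)) : PowerSeries (ZMod b)))⁻¹)

/-- `v_m(g/p) = Σ_{l=1}^m t_l b^{-l}`. -/
def vmap (b : ℕ) [Fact (Nat.Prime b)] (m : ℕ) (p g : Polynomial (ZMod b)) : ℝ :=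
  ∑ l ∈ Finset.Icc 1 m, ((lcoeff b m p g l).val : ℝ) / (b : ℝ) ^ l

/-- The `j`-th coordinate `z_{n,j} = v_m(n(x) q_j(x)/p(x))` of the `n`-th point of the
polynomial lattice point set with modulus `p` and generating polynomial `qj`. -/
def plp (b : ℕ) [Fact (Nat.Prime b)] (m : ℕ) (p qj : Polynomial (ZMod b)) (n : ℕ) : ℝ :=
  vmap b m p (trunc b m n * qj)

/-- The `i`-th base-`b` digit (for `i ≥ 1`) of a real number `x ∈ [0,1)`, taken from the
expansion in which infinitely many digits differ from `b - 1`. -/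
def rdigit (b : ℕ) (x : ℝ) (i : ℕ) : ℕ := (⌊x * (b : ℝ) ^ i⌋.toNat) % b

/-- The `k`-th base-`b` Walsh function. -/
def walsh (b k : ℕ) (x : ℝ) : ℂ :=
  Complex.exp (2 * (Real.pi : ℂ) * Complex.I *
    (((∑ a ∈ Finset.range (Nat.log b k + 1), rdigit b x (a + 1) * digit b k a : ℕ)) : ℂ) / (b : ℂ))

/-- `θ(q̃)`: the part of the quality criterion involving the new component `q̃` at index `τ+1`. -/
def theta (b α d m τ : ℕ) (γ : Finset ℕ → ℝ) (p : Polynomial (ZMod b))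
    (q : ℕ → Polynomial (ZMod b)) (qt : Polynomial (ZMod b)) : ℝ :=
  ∑ u ∈ (Finset.Icc 1 τ).powerset,
    (4 : ℝ) ^ ((blk d (insert (τ + 1) u)).card * (d - α)) * γ (blk d (insert (τ + 1) u)) *
      ∑' kk : (↥u → ℕ) × ℕ,
        (if (∀ j, 1 ≤ kk.1 j) ∧ 1 ≤ kk.2 ∧
            p ∣ ((∑ j, trunc b m (kk.1 j) * q (j : ℕ)) + trunc b m kk.2 * qt)
         then (∏ j, rfun b α d (kk.1 j)) * rfun b α d kk.2 else 0)

end ISPLR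

/-!
Averaging over the `b ^ m - 1` candidates `q̃`. As `0 < λ ≤ 1`, `t ↦ t ^ λ` is subadditive, so
`θ(q̃) ^ λ` is at most the sum of the `λ`-th powers of its terms. In the sum of these over all
`q̃`, a multi-index `(k, k_{τ+1})` with `p ∤ σ := ∑ j, tr_m(k_j) q_j` is counted for at most one `q̃`
(`p` is prime and `deg q̃ < deg p`); if `p ∣ σ` it is counted only when `tr_m(k_{τ+1}) = 0`, i.e.
`b ^ m ∣ k_{τ+1}`, and then for all `b ^ m - 1` candidates, which the decay
`r(b ^ m k) ^ λ = b ^ (-(2 min(α,d) + 1) m λ) r(k) ^ λ` pays for. What is left factors as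
`(∑_{k ≥ 1} r(k) ^ λ) ^ (|u| + 1)`, and grouping `k` by `⌊log_b k⌋` gives
`∑_{k ≥ 1} r(k) ^ λ = (b - 1) / (1 - b ^ (1 - (2 min(α,d) + 1) λ)) ≤ C̃`.

The estimates are made in `ℝ≥0∞`, where every series converges, and transferred to the
real-valued `theta` at the end.
-/

open scoped ENNReal

namespace ENNReal

theorem tsum_pi_prod_eq_prod_tsum {ι κ : Type*} [Fintype ι] (g : ι → κ → ℝ≥0∞) :
    ∑' k : ι → κ, ∏ i, g i (k i) = ∏ i, ∑' n, g i n := by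
  revert g
  refine Finite.induction_empty_option (P := fun ι => ∀ [Fintype ι] (g : ι → κ → ℝ≥0∞),
    ∑' k : ι → κ, ∏ i, g i (k i) = ∏ i, ∑' n, g i n) ?_ ?_ ?_ ι
  · intro α β e ih _ g
    let _ := Fintype.ofEquiv β e.symm
    rw [← (e.arrowCongr (Equiv.refl κ)).tsum_eq]
    simpa [← e.prod_comp] using ih (fun a => g (e a))
  · intro _ g
    simp
  · intro α _ ih inst g
    obtain rfl : inst = instFintypeOption := Subsingleton.elim _ _
    rw [← Equiv.piOptionEquivProd.symm.tsum_eq, ENNReal.tsum_prod']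
    simp [Fintype.prod_option, ENNReal.tsum_mul_left, ENNReal.tsum_mul_right, ih]

theorem rpow_sum_le_sum_rpow {ι : Type*} (s : Finset ι) (f : ι → ℝ≥0∞) {t : ℝ}
    (ht0 : 0 < t) (ht1 : t ≤ 1) : (∑ i ∈ s, f i) ^ t ≤ ∑ i ∈ s, f i ^ t := by
  induction s using Finset.cons_induction with
  | empty => simp [ht0]
  | cons a s ha ih =>
    rw [Finset.sum_cons, Finset.sum_cons]
    exact (ENNReal.rpow_add_le_add_rpow _ _ ht0.le ht1).trans (add_le_add_right ih _)

theorem rpow_tsum_le_tsum_rpow {ι : Type*} (f : ι → ℝ≥0∞) {t : ℝ} (ht0 : 0 < t) (ht1 : t ≤ 1) :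
    (∑' i, f i) ^ t ≤ ∑' i, f i ^ t := by
  rw [← ENNReal.le_rpow_inv_iff ht0]
  refine ENNReal.summable.tsum_le_of_sum_le fun s => ?_
  rw [ENNReal.le_rpow_inv_iff ht0]
  exact (rpow_sum_le_sum_rpow s f ht0 ht1).trans (ENNReal.sum_le_tsum s)

theorem tsum_ite_dvd_eq_tsum_mul {n : ℕ} (hn : n ≠ 0) (g : ℕ → ℝ≥0∞) :
    ∑' k, (if n ∣ k then g k else 0) = ∑' k, g (n * k) := by
  rw [← (mul_right_injective₀ hn).tsum_eq]
  · simp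
  · intro k hk
    by_cases hnk : n ∣ k
    · obtain ⟨c, rfl⟩ := hnk
      exact ⟨c, rfl⟩
    · exact absurd (if_neg hnk) hk

theorem ofReal_tsum_le_tsum_ofReal {ι : Type*} {f : ι → ℝ} (hf : ∀ i, 0 ≤ f i) :
    ENNReal.ofReal (∑' i, f i) ≤ ∑' i, ENNReal.ofReal (f i) := by
  by_cases hs : Summable f
  · exact (ENNReal.ofReal_tsum_of_nonneg hf hs).le
  · simp [tsum_eq_zero_of_not_summable hs]

end ENNReal

theorem Finset.exists_le_one_div_card_mul_of_sum_le {ι : Type*} {s : Finset ι} (hs : s.Nonempty)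
    {f : ι → ℝ} {C : ℝ} (h : ∑ i ∈ s, f i ≤ C) : ∃ i ∈ s, f i ≤ 1 / s.card * C := by
  have hcard : (s.card : ℝ) ≠ 0 := Nat.cast_ne_zero.2 hs.card_pos.ne'
  refine exists_le_of_sum_le hs (h.trans_eq ?_)
  rw [Finset.sum_const, nsmul_eq_mul]
  field_simp

namespace Polynomial

open Finset

variable {R : Type*} [CommRing R]

def nonzeroDegreeLT (R : Type*) [CommRing R] [Fintype R] (m : ℕ) : Finset R[X] :=
  (univ.erase 0).map
    ((degreeLTEquiv R m).symm.toEquiv.toEmbedding.trans (Function.Embedding.subtype _))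

theorem mem_nonzeroDegreeLT [Fintype R] {m : ℕ} {q : R[X]} :
    q ∈ nonzeroDegreeLT R m ↔ q ≠ 0 ∧ q.degree < m := by
  constructor
  · intro hq
    obtain ⟨c, hc, rfl⟩ := mem_map.1 hq
    set q := (degreeLTEquiv R m).symm c
    refine ⟨fun h0 => (mem_erase.1 hc).1 ?_, mem_degreeLT.1 q.2⟩
    rw [← (degreeLTEquiv R m).apply_symm_apply c]
    exact (degreeLTEquiv_eq_zero_iff_eq_zero q.2).2 h0
  · rintro ⟨h0, hdeg⟩
    refine mem_map.2 ⟨degreeLTEquiv R m ⟨q, mem_degreeLT.2 hdeg⟩, ?_, by simp⟩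
    simpa [degreeLTEquiv_eq_zero_iff_eq_zero] using h0

theorem card_nonzeroDegreeLT [Fintype R] (m : ℕ) :
    #(nonzeroDegreeLT R m) = Fintype.card R ^ m - 1 := by
  simp [nonzeroDegreeLT]

variable [IsDomain R]

theorem card_filter_dvd_add_mul_le_one {p σ c : R[X]} (hp : Prime p) (hσ : ¬ p ∣ σ)
    {S : Finset R[X]} (hS : ∀ q ∈ S, q.degree < p.degree) :
    #{q ∈ S | p ∣ σ + c * q} ≤ 1 := by
  refine card_le_one.2 fun q₁ h₁ q₂ h₂ => ?_
  rw [mem_filter] at h₁ h₂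
  have hdiff : p ∣ c * (q₁ - q₂) := by
    simpa [mul_sub] using dvd_sub h₁.2 h₂.2
  rcases hp.dvd_or_dvd hdiff with hc | hq
  · exact absurd ((dvd_add_left (dvd_mul_of_dvd_left hc q₁)).1 h₁.2) hσ
  · refine sub_eq_zero.1 (eq_zero_of_dvd_of_degree_lt hq ?_)
    exact (degree_sub_le _ _).trans_lt (max_lt (hS q₁ h₁.1) (hS q₂ h₂.1))

theorem filter_dvd_add_mul_eq_empty {p σ c : R[X]} (hp : Prime p) (hσ : p ∣ σ) (hc : ¬ p ∣ c)
    {S : Finset R[X]} (hS : ∀ q ∈ S, q ≠ 0 ∧ q.degree < p.degree) :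
    {q ∈ S | p ∣ σ + c * q} = ∅ := by
  refine filter_eq_empty_iff.2 fun q hq hdvd => ?_
  rcases hp.dvd_or_dvd ((dvd_add_right hσ).1 hdvd) with hpc | hpq
  · exact hc hpc
  · exact not_dvd_of_degree_lt (hS q hq).1 (hS q hq).2 hpq

end Polynomial

namespace Nat

theorem log_pow_mul {b : ℕ} (hb : 1 < b) (m : ℕ) {k : ℕ} (hk : k ≠ 0) :
    Nat.log b (b ^ m * k) = m + Nat.log b k := by
  induction m with
  | zero => simp
  | succ m ih =>
    rw [pow_succ, mul_right_comm, Nat.log_mul_base hb (by positivity), ih]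
    ring

end Nat

section LevelWeight

open Finset

variable {b : ℕ} {ε : ℝ≥0∞}

def levelWeight (b : ℕ) (ε : ℝ≥0∞) (k : ℕ) : ℝ≥0∞ := if k = 0 then 0 else ε ^ Nat.log b k

theorem levelWeight_zero : levelWeight b ε 0 = 0 := if_pos rfl

theorem levelWeight_pow_mul (hb : 1 < b) (m k : ℕ) :
    levelWeight b ε (b ^ m * k) = ε ^ m * levelWeight b ε k := by
  rcases eq_or_ne k 0 with rfl | hk
  · simp [levelWeight]
  · have : b ^ m * k ≠ 0 := by positivity
    simp [levelWeight, hk, this, Nat.log_pow_mul hb m hk, pow_add]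

theorem sum_range_pow_levelWeight (hb : 1 < b) (N : ℕ) :
    ∑ k ∈ range (b ^ N), levelWeight b ε k = ∑ n ∈ range N, ((b : ℝ≥0∞) - 1) * (b * ε) ^ n := by
  induction N with
  | zero => simp [levelWeight]
  | succ N ih =>
    have hle : b ^ N ≤ b ^ (N + 1) := Nat.pow_le_pow_right (by omega) N.le_succ
    have hblock : ∀ k ∈ Ico (b ^ N) (b ^ (N + 1)), levelWeight b ε k = ε ^ N := fun k hk => by
      rw [mem_Ico] at hk
      have hk0 : k ≠ 0 := (Nat.pos_of_ne_zero (by positivity) |>.trans_le hk.1).ne'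
      rw [levelWeight, if_neg hk0, Nat.log_eq_of_pow_le_of_lt_pow hk.1 hk.2]
    rw [range_eq_Ico, ← sum_Ico_consecutive _ (Nat.zero_le _) hle, ← range_eq_Ico, ih,
      sum_range_succ, sum_congr rfl hblock, sum_const, Nat.card_Ico, nsmul_eq_mul]
    congr 1
    rw [pow_succ, ← Nat.mul_sub_one, Nat.cast_mul, ENNReal.natCast_sub, mul_pow]
    push_cast
    ring

theorem tsum_levelWeight (hb : 1 < b) :
    ∑' k, levelWeight b ε k = ((b : ℝ≥0∞) - 1) * (1 - b * ε)⁻¹ := by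
  have hpow : Filter.Tendsto (fun N => b ^ N) Filter.atTop Filter.atTop :=
    tendsto_pow_atTop_atTop_of_one_lt hb
  rw [ENNReal.tsum_eq_iSup_nat' hpow, ← ENNReal.tsum_geometric, ENNReal.tsum_eq_iSup_nat,
    ENNReal.mul_iSup]
  simp_rw [sum_range_pow_levelWeight hb, ← mul_sum]

theorem tsum_levelWeight_pow_mul (hb : 1 < b) (m : ℕ) :
    ∑' k, levelWeight b ε (b ^ m * k) = ε ^ m * ∑' k, levelWeight b ε k := by
  simp_rw [levelWeight_pow_mul hb, ENNReal.tsum_mul_left]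

theorem card_mul_tsum_levelWeight_pow_mul_le (hb : 1 < b) (hbε : b * ε ≤ 1) (m : ℕ) :
    ((b ^ m - 1 : ℕ) : ℝ≥0∞) * ∑' k, levelWeight b ε (b ^ m * k) ≤ ∑' k, levelWeight b ε k := by
  rw [tsum_levelWeight_pow_mul hb, ← mul_assoc]
  refine mul_le_of_le_one_left zero_le ?_
  calc ((b ^ m - 1 : ℕ) : ℝ≥0∞) * ε ^ m ≤ (b : ℝ≥0∞) ^ m * ε ^ m := by
        gcongr
        exact_mod_cast Nat.sub_le _ _
    _ = (b * ε) ^ m := (mul_pow _ _ _).symm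
    _ ≤ 1 := pow_le_one₀ zero_le hbε

end LevelWeight

namespace ISPLR

open Finset Polynomial

section Trunc

variable {b : ℕ}

theorem pow_dvd_iff_digit_eq_zero (hb : 0 < b) (m k : ℕ) :
    b ^ m ∣ k ↔ ∀ i < m, digit b k i = 0 := by
  induction m with
  | zero => simp
  | succ m ih =>
    rw [Nat.dvd_iff_mod_eq_zero, Nat.mod_pow_succ, Nat.add_eq_zero_iff, ← Nat.dvd_iff_mod_eq_zero,
      ih, mul_eq_zero, or_iff_right (by positivity), Nat.forall_lt_succ_right]
    rfl

theorem coeff_trunc (m k j : ℕ) :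
    (trunc b m k).coeff j = if j < m then (digit b k j : ZMod b) else 0 := by
  simp [trunc, finsetSum_coeff]

theorem trunc_eq_zero_iff (hb : 0 < b) {m k : ℕ} : trunc b m k = 0 ↔ b ^ m ∣ k := by
  rw [pow_dvd_iff_digit_eq_zero hb, Polynomial.ext_iff]
  refine forall_congr' fun i => ?_
  by_cases hi : i < m
  · rw [coeff_trunc, if_pos hi, coeff_zero, ZMod.natCast_eq_zero_iff]
    simp only [hi, true_imp_iff]
    exact ⟨fun h => Nat.eq_zero_of_dvd_of_lt h (Nat.mod_lt _ hb), fun h => h ▸ dvd_zero b⟩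
  · simp [coeff_trunc, hi]

theorem degree_trunc_lt (m k : ℕ) : (trunc b m k).degree < m := by
  refine (degree_sum_le _ _).trans_lt ((Finset.sup_lt_iff (WithBot.bot_lt_coe m)).2 fun i hi => ?_)
  exact (degree_C_mul_X_pow_le _ _).trans_lt (WithBot.coe_lt_coe.2 (mem_range.1 hi))

end Trunc

section Counting

variable {b m : ℕ} [Fact b.Prime] {p : (ZMod b)[X]}

theorem tsum_card_filter_dvd_mul_le (hp : Irreducible p) (hdeg : p.degree = m)
    (σ : (ZMod b)[X]) {g : ℕ → ℝ≥0∞}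
    (hg : ((b ^ m - 1 : ℕ) : ℝ≥0∞) * ∑' k, g (b ^ m * k) ≤ ∑' k, g k) :
    ∑' k, (#{qt ∈ nonzeroDegreeLT (ZMod b) m | p ∣ σ + trunc b m k * qt} : ℝ≥0∞) * g k
      ≤ ∑' k, g k := by
  have hb : 0 < b := (Fact.out : b.Prime).pos
  have hS : ∀ q ∈ nonzeroDegreeLT (ZMod b) m, q ≠ 0 ∧ q.degree < p.degree := fun q hq => by
    rw [hdeg]
    exact mem_nonzeroDegreeLT.1 hq
  by_cases hσ : p ∣ σ
  -- only `k` with `trunc b m k = 0` can contribute, and then for every candidate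
  · calc _ ≤ ∑' k, ((b ^ m - 1 : ℕ) : ℝ≥0∞) * (if b ^ m ∣ k then g k else 0) := by
          refine ENNReal.tsum_le_tsum fun k => ?_
          split_ifs with hk
          · gcongr
            exact (card_filter_le _ _).trans (by simp [card_nonzeroDegreeLT])
          · have htr : ¬ p ∣ trunc b m k := not_dvd_of_degree_lt
              (mt (trunc_eq_zero_iff hb).1 hk) (hdeg ▸ degree_trunc_lt m k)
            simp [filter_dvd_add_mul_eq_empty hp.prime hσ htr hS]
      _ = ((b ^ m - 1 : ℕ) : ℝ≥0∞) * ∑' k, g (b ^ m * k) := by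
          rw [ENNReal.tsum_mul_left, ENNReal.tsum_ite_dvd_eq_tsum_mul (by positivity)]
      _ ≤ ∑' k, g k := hg
  · refine ENNReal.tsum_le_tsum fun k => mul_le_of_le_one_left zero_le ?_
    exact_mod_cast card_filter_dvd_add_mul_le_one hp.prime hσ fun q hq => (hS q hq).2

theorem sum_tsum_ite_dvd_le (hp : Irreducible p) (hdeg : p.degree = m) {κ : Type*}
    (σ : κ → (ZMod b)[X]) (h : κ → ℝ≥0∞) {g : ℕ → ℝ≥0∞}
    (hg : ((b ^ m - 1 : ℕ) : ℝ≥0∞) * ∑' k, g (b ^ m * k) ≤ ∑' k, g k) :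
    ∑ qt ∈ nonzeroDegreeLT (ZMod b) m, ∑' kk : κ × ℕ,
        (if p ∣ σ kk.1 + trunc b m kk.2 * qt then h kk.1 * g kk.2 else 0)
      ≤ (∑' k, h k) * ∑' k, g k := by
  rw [← Summable.tsum_finsetSum fun _ _ => ENNReal.summable, ENNReal.tsum_prod',
    ← ENNReal.tsum_mul_right]
  refine ENNReal.tsum_le_tsum fun k₁ => ?_
  calc ∑' k₂, ∑ qt ∈ nonzeroDegreeLT (ZMod b) m,
          (if p ∣ σ k₁ + trunc b m k₂ * qt then h k₁ * g k₂ else 0)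
      = h k₁ * ∑' k₂, (#{qt ∈ nonzeroDegreeLT (ZMod b) m | p ∣ σ k₁ + trunc b m k₂ * qt} : ℝ≥0∞)
          * g k₂ := by
        rw [← ENNReal.tsum_mul_left]
        refine tsum_congr fun k₂ => ?_
        rw [← sum_filter, sum_const, nsmul_eq_mul]
        ring
    _ ≤ h k₁ * ∑' k, g k := mul_le_mul_right (tsum_card_filter_dvd_mul_le hp hdeg _ hg) _

end Counting

section Weights

variable {b α d : ℕ} {lam : ℝ}

def rweight (b α d : ℕ) (lam : ℝ) : ℕ → ℝ≥0∞ :=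
  levelWeight b (ENNReal.ofReal ((b : ℝ) ^ (-((2 * ((min α d : ℕ) : ℝ) + 1) * lam))))

theorem rfun_nonneg (k : ℕ) : 0 ≤ rfun b α d k := by
  unfold rfun
  split_ifs <;> positivity

theorem ofReal_rfun_rpow (hlam : 0 ≤ lam) {k : ℕ} (hk : k ≠ 0) :
    ENNReal.ofReal (rfun b α d k) ^ lam = rweight b α d lam k := by
  have hb : (0 : ℝ) ≤ b := b.cast_nonneg
  rw [ENNReal.ofReal_rpow_of_nonneg (rfun_nonneg k) hlam, rweight, levelWeight, if_neg hk,
    ← ENNReal.ofReal_pow (Real.rpow_nonneg hb _), rfun, if_neg hk, ← Real.rpow_intCast,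
    ← Real.rpow_mul hb, ← Real.rpow_mul_natCast hb, mu]
  push_cast
  ring_nf

theorem natCast_mul_rweight_base (hb : 1 < b) :
    (b : ℝ≥0∞) * ENNReal.ofReal ((b : ℝ) ^ (-((2 * ((min α d : ℕ) : ℝ) + 1) * lam)))
      = ENNReal.ofReal ((b : ℝ) ^ (1 - (2 * ((min α d : ℕ) : ℝ) + 1) * lam)) := by
  have hb0 : (0 : ℝ) < b := by positivity
  rw [← ENNReal.ofReal_natCast, ← ENNReal.ofReal_mul hb0.le, sub_eq_add_neg,
    Real.rpow_add hb0, Real.rpow_one]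

theorem rpow_one_sub_lt_one (hb : 1 < b) (hlam : 1 / (2 * ((min α d : ℕ) : ℝ) + 1) < lam) :
    (b : ℝ) ^ (1 - (2 * ((min α d : ℕ) : ℝ) + 1) * lam) < 1 := by
  refine Real.rpow_lt_one_of_one_lt_of_neg (by exact_mod_cast hb) ?_
  rw [div_lt_iff₀ (by positivity)] at hlam
  linarith

theorem tsum_rweight_le_ofReal_Ctilde (hb : 1 < b)
    (hlam : 1 / (2 * ((min α d : ℕ) : ℝ) + 1) < lam) :
    ∑' k, rweight b α d lam k ≤ ENNReal.ofReal (Ctilde b α d lam) := by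
  set x := (b : ℝ) ^ (1 - (2 * ((min α d : ℕ) : ℝ) + 1) * lam)
  have hx : x < 1 := rpow_one_sub_lt_one hb hlam
  have hb1 : (1 : ℝ) ≤ b := by exact_mod_cast hb.le
  calc ∑' k, rweight b α d lam k = ((b : ℝ≥0∞) - 1) * (1 - ENNReal.ofReal x)⁻¹ := by
        rw [rweight, tsum_levelWeight hb, natCast_mul_rweight_base hb]
    _ = ENNReal.ofReal (((b : ℝ) - 1) / (1 - x)) := by
        rw [div_eq_mul_inv, ENNReal.ofReal_mul (by linarith),
          ENNReal.ofReal_inv_of_pos (by linarith), ENNReal.ofReal_sub _ zero_le_one,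
          ENNReal.ofReal_sub _ (by positivity), ENNReal.ofReal_one, ENNReal.ofReal_natCast]
    _ ≤ ENNReal.ofReal (Ctilde b α d lam) := ENNReal.ofReal_le_ofReal (le_max_right _ _)

theorem card_mul_tsum_rweight_pow_mul_le (hb : 1 < b)
    (hlam : 1 / (2 * ((min α d : ℕ) : ℝ) + 1) < lam) (m : ℕ) :
    ((b ^ m - 1 : ℕ) : ℝ≥0∞) * ∑' k, rweight b α d lam (b ^ m * k) ≤ ∑' k, rweight b α d lam k := by
  refine card_mul_tsum_levelWeight_pow_mul_le hb ?_ m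
  rw [natCast_mul_rweight_base hb]
  exact ENNReal.ofReal_le_one.2 (rpow_one_sub_lt_one hb hlam).le

theorem Ctilde_nonneg (hb : 1 < b)
    (hlam : 1 / (2 * ((min α d : ℕ) : ℝ) + 1) < lam) : 0 ≤ Ctilde b α d lam := by
  have hb1 : (1 : ℝ) ≤ b := by exact_mod_cast hb.le
  exact (div_nonneg (by linarith) (sub_nonneg.2 (rpow_one_sub_lt_one hb hlam).le)).trans
    (le_max_right _ _)

end Weights

section Theta

variable {b α d m τ : ℕ} {γ : Finset ℕ → ℝ} {p : (ZMod b)[X]} {q : ℕ → (ZMod b)[X]} {lam : ℝ}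

def thetaSummand (b α d m : ℕ) (p : (ZMod b)[X]) (q : ℕ → (ZMod b)[X]) (qt : (ZMod b)[X])
    (u : Finset ℕ) (kk : (↥u → ℕ) × ℕ) : ℝ :=
  if (∀ j, 1 ≤ kk.1 j) ∧ 1 ≤ kk.2 ∧
      p ∣ ((∑ j, trunc b m (kk.1 j) * q (j : ℕ)) + trunc b m kk.2 * qt)
  then (∏ j, rfun b α d (kk.1 j)) * rfun b α d kk.2 else 0

theorem thetaSummand_nonneg (qt : (ZMod b)[X]) (u : Finset ℕ) (kk : (↥u → ℕ) × ℕ) :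
    0 ≤ thetaSummand b α d m p q qt u kk := by
  unfold thetaSummand
  split_ifs
  exacts [mul_nonneg (prod_nonneg fun _ _ => rfun_nonneg _) (rfun_nonneg _), le_rfl]

theorem ofReal_thetaSummand_rpow (hlam : 0 < lam) (qt : (ZMod b)[X]) (u : Finset ℕ)
    (kk : (↥u → ℕ) × ℕ) :
    ENNReal.ofReal (thetaSummand b α d m p q qt u kk) ^ lam =
      if p ∣ ((∑ j, trunc b m (kk.1 j) * q (j : ℕ)) + trunc b m kk.2 * qt)
      then (∏ j, rweight b α d lam (kk.1 j)) * rweight b α d lam kk.2 else 0 := by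
  unfold thetaSummand
  split_ifs with h hP hP
  · rw [ENNReal.ofReal_mul (prod_nonneg fun j _ => rfun_nonneg _),
      ENNReal.mul_rpow_of_nonneg _ _ hlam.le,
      ENNReal.ofReal_prod_of_nonneg fun j _ => rfun_nonneg _,
      ← ENNReal.prod_rpow_of_nonneg hlam.le, ofReal_rfun_rpow hlam.le (by have := h.2.1; omega)]
    congr 1
    exact prod_congr rfl fun j _ => ofReal_rfun_rpow hlam.le (by have := h.1 j; omega)
  · exact absurd h.2.2 hP
  · rw [ENNReal.ofReal_zero, ENNReal.zero_rpow_of_pos hlam]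
    simp only [hP, and_true, not_and_or, not_forall, not_le, Nat.lt_one_iff] at h
    rcases h with ⟨j, hj⟩ | hk₂
    · rw [prod_eq_zero (mem_univ j) (by rw [hj]; exact levelWeight_zero), zero_mul]
    · rw [hk₂, rweight, levelWeight_zero, mul_zero]
  · rw [ENNReal.ofReal_zero, ENNReal.zero_rpow_of_pos hlam]

def thetaWeight (d α τ : ℕ) (γ : Finset ℕ → ℝ) (u : Finset ℕ) : ℝ :=
  (4 : ℝ) ^ ((blk d (insert (τ + 1) u)).card * (d - α)) * γ (blk d (insert (τ + 1) u))

theorem thetaWeight_nonneg (hγ : ∀ w, 0 ≤ γ w) (u : Finset ℕ) : 0 ≤ thetaWeight d α τ γ u :=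
  mul_nonneg (by positivity) (hγ _)

theorem thetaWeight_rpow (hγ : ∀ w, 0 ≤ γ w) (u : Finset ℕ) :
    thetaWeight d α τ γ u ^ lam =
      (4 : ℝ) ^ (lam * (((blk d (insert (τ + 1) u)).card * (d - α) : ℕ) : ℝ)) *
        γ (blk d (insert (τ + 1) u)) ^ lam := by
  rw [thetaWeight, Real.mul_rpow (by positivity) (hγ _), mul_comm lam,
    Real.rpow_natCast_mul (by norm_num)]

theorem theta_eq (qt : (ZMod b)[X]) :
    theta b α d m τ γ p q qt = ∑ u ∈ (Icc 1 τ).powerset,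
      thetaWeight d α τ γ u * ∑' kk, thetaSummand b α d m p q qt u kk := rfl

theorem theta_nonneg (hγ : ∀ w, 0 ≤ γ w) (qt : (ZMod b)[X]) : 0 ≤ theta b α d m τ γ p q qt :=
  sum_nonneg fun u _ =>
    mul_nonneg (thetaWeight_nonneg hγ u) (tsum_nonneg (thetaSummand_nonneg qt u))

theorem ofReal_theta_rpow_le (hγ : ∀ w, 0 ≤ γ w) (hlam0 : 0 < lam) (hlam1 : lam ≤ 1)
    (qt : (ZMod b)[X]) :
    ENNReal.ofReal (theta b α d m τ γ p q qt ^ lam) ≤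
      ∑ u ∈ (Icc 1 τ).powerset, ENNReal.ofReal (thetaWeight d α τ γ u) ^ lam *
        ∑' kk, ENNReal.ofReal (thetaSummand b α d m p q qt u kk) ^ lam := by
  rw [← ENNReal.ofReal_rpow_of_nonneg (theta_nonneg hγ qt) hlam0.le]
  calc ENNReal.ofReal (theta b α d m τ γ p q qt) ^ lam
      ≤ (∑ u ∈ (Icc 1 τ).powerset, ENNReal.ofReal (thetaWeight d α τ γ u) *
          ∑' kk, ENNReal.ofReal (thetaSummand b α d m p q qt u kk)) ^ lam := by
        gcongr
        rw [theta_eq, ENNReal.ofReal_sum_of_nonneg fun u _ =>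
          mul_nonneg (thetaWeight_nonneg hγ u) (tsum_nonneg (thetaSummand_nonneg qt u))]
        gcongr with u
        rw [ENNReal.ofReal_mul (thetaWeight_nonneg hγ u)]
        exact mul_le_mul_right (ENNReal.ofReal_tsum_le_tsum_ofReal (thetaSummand_nonneg qt u)) _
    _ ≤ _ := by
        refine (ENNReal.rpow_sum_le_sum_rpow _ _ hlam0 hlam1).trans (sum_le_sum fun u _ => ?_)
        rw [ENNReal.mul_rpow_of_nonneg _ _ hlam0.le]
        exact mul_le_mul_right (ENNReal.rpow_tsum_le_tsum_rpow _ hlam0 hlam1) _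

theorem sum_tsum_ofReal_thetaSummand_rpow_le [Fact b.Prime] (hp : Irreducible p)
    (hdeg : p.degree = m) (hlam : 1 / (2 * ((min α d : ℕ) : ℝ) + 1) < lam) (u : Finset ℕ) :
    ∑ qt ∈ nonzeroDegreeLT (ZMod b) m,
        ∑' kk, ENNReal.ofReal (thetaSummand b α d m p q qt u kk) ^ lam
      ≤ ENNReal.ofReal (Ctilde b α d lam) ^ (u.card + 1) := by
  have hb : 1 < b := (Fact.out : b.Prime).one_lt
  have hlam0 : 0 < lam := lt_trans (by positivity) hlam
  simp only [ofReal_thetaSummand_rpow hlam0]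
  calc _ ≤ (∑' k : ↥u → ℕ, ∏ j, rweight b α d lam (k j)) * ∑' k, rweight b α d lam k :=
        sum_tsum_ite_dvd_le hp hdeg (fun k : ↥u → ℕ => ∑ j, trunc b m (k j) * q j)
          (fun k => ∏ j, rweight b α d lam (k j)) (card_mul_tsum_rweight_pow_mul_le hb hlam m)
    _ = (∑' k, rweight b α d lam k) ^ (u.card + 1) := by
        rw [ENNReal.tsum_pi_prod_eq_prod_tsum, prod_const, card_univ, Fintype.card_coe, pow_succ]
    _ ≤ ENNReal.ofReal (Ctilde b α d lam) ^ (u.card + 1) := by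
        gcongr
        exact tsum_rweight_le_ofReal_Ctilde hb hlam

theorem sum_theta_rpow_le [Fact b.Prime] (hp : Irreducible p) (hdeg : p.degree = m)
    (hγ : ∀ w, 0 ≤ γ w) (hlam1 : 1 / (2 * ((min α d : ℕ) : ℝ) + 1) < lam) (hlam2 : lam ≤ 1) :
    ∑ qt ∈ nonzeroDegreeLT (ZMod b) m, theta b α d m τ γ p q qt ^ lam ≤
      ∑ u ∈ (Icc 1 τ).powerset,
        (4 : ℝ) ^ (lam * (((blk d (insert (τ + 1) u)).card * (d - α) : ℕ) : ℝ)) *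
          γ (blk d (insert (τ + 1) u)) ^ lam * Ctilde b α d lam ^ (u.card + 1) := by
  have hlam0 : 0 < lam := lt_trans (by positivity) hlam1
  have hC := Ctilde_nonneg (Fact.out : b.Prime).one_lt hlam1
  simp_rw [← thetaWeight_rpow hγ]
  have hR : ∀ u, 0 ≤ thetaWeight d α τ γ u ^ lam * Ctilde b α d lam ^ (u.card + 1) := fun u =>
    mul_nonneg (Real.rpow_nonneg (thetaWeight_nonneg hγ u) _) (pow_nonneg hC _)
  rw [← ENNReal.ofReal_le_ofReal_iff (sum_nonneg fun u _ => hR u),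
    ENNReal.ofReal_sum_of_nonneg fun qt _ => Real.rpow_nonneg (theta_nonneg hγ qt) _,
    ENNReal.ofReal_sum_of_nonneg fun u _ => hR u]
  calc _ ≤ ∑ qt ∈ nonzeroDegreeLT (ZMod b) m, ∑ u ∈ (Icc 1 τ).powerset,
          ENNReal.ofReal (thetaWeight d α τ γ u) ^ lam *
            ∑' kk, ENNReal.ofReal (thetaSummand b α d m p q qt u kk) ^ lam :=
        sum_le_sum fun qt _ => ofReal_theta_rpow_le hγ hlam0 hlam2 qt
    _ = ∑ u ∈ (Icc 1 τ).powerset, ENNReal.ofReal (thetaWeight d α τ γ u) ^ lam *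
          ∑ qt ∈ nonzeroDegreeLT (ZMod b) m,
            ∑' kk, ENNReal.ofReal (thetaSummand b α d m p q qt u kk) ^ lam := by
        rw [sum_comm]
        simp_rw [mul_sum]
    _ ≤ ∑ u ∈ (Icc 1 τ).powerset, ENNReal.ofReal (thetaWeight d α τ γ u) ^ lam *
          ENNReal.ofReal (Ctilde b α d lam) ^ (u.card + 1) := by
        gcongr with u
        exact sum_tsum_ofReal_thetaSummand_rpow_le hp hdeg hlam1 u
    _ = _ := by
        refine sum_congr rfl fun u _ => ?_
        rw [ENNReal.ofReal_rpow_of_nonneg (thetaWeight_nonneg hγ u) hlam0.le,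
          ENNReal.ofReal_mul (Real.rpow_nonneg (thetaWeight_nonneg hγ u) _), ENNReal.ofReal_pow hC]

end Theta

theorem statement10_general (b : ℕ) (hb : Nat.Prime b) (m d α τ : ℕ)
    (hm : 1 ≤ m)
    (p : Polynomial (ZMod b)) (hp : Irreducible p) (hdeg : p.degree = (m : WithBot ℕ))
    (γ : Finset ℕ → ℝ) (hγ : ∀ w, 0 ≤ γ w)
    (lam : ℝ) (hlam1 : 1 / (2 * ((min α d : ℕ) : ℝ) + 1) < lam) (hlam2 : lam ≤ 1)
    (q : ℕ → Polynomial (ZMod b)) :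
    ∃ qt : Polynomial (ZMod b), Rbm b m qt ∧
      theta b α d m τ γ p q qt ^ lam ≤
        (1 / ((b : ℝ) ^ m - 1)) *
          ∑ u ∈ (Finset.Icc 1 τ).powerset,
            (4 : ℝ) ^ (lam * (((blk d (insert (τ + 1) u)).card * (d - α) : ℕ) : ℝ)) *
              γ (blk d (insert (τ + 1) u)) ^ lam * Ctilde b α d lam ^ (u.card + 1) := by
  have : Fact b.Prime := ⟨hb⟩
  have hcard : (#(nonzeroDegreeLT (ZMod b) m) : ℝ) = (b : ℝ) ^ m - 1 := by
    rw [card_nonzeroDegreeLT, ZMod.card, Nat.cast_sub (Nat.one_le_pow _ _ hb.pos)]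
    push_cast
    rfl
  have hne : (nonzeroDegreeLT (ZMod b) m).Nonempty := by
    rw [← card_pos, card_nonzeroDegreeLT, ZMod.card, Nat.sub_pos_iff_lt]
    exact Nat.one_lt_pow (by omega) hb.one_lt
  obtain ⟨qt, hqt, hle⟩ :=
    exists_le_one_div_card_mul_of_sum_le hne
      (sum_theta_rpow_le (τ := τ) (q := q) hp hdeg hγ hlam1 hlam2)
  exact ⟨qt, mem_nonzeroDegreeLT.1 hqt, hcard ▸ hle⟩

theorem statement10 (b : ℕ) (hb : Nat.Prime b) (m s d α τ : ℕ)
    (hm : 1 ≤ m) (hs : 1 ≤ s) (hd : 1 ≤ d) (hα : 1 ≤ α)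
    (hτ1 : 1 ≤ τ) (hτds : τ + 1 ≤ d * s)
    (p : Polynomial (ZMod b)) (hp : Irreducible p) (hdeg : p.degree = (m : WithBot ℕ))
    (γ : Finset ℕ → ℝ) (hγ : ∀ w, 0 ≤ γ w)
    (lam : ℝ) (hlam1 : 1 / (2 * ((min α d : ℕ) : ℝ) + 1) < lam) (hlam2 : lam ≤ 1)
    (q : ℕ → Polynomial (ZMod b)) (hq : ∀ j, 1 ≤ j → j ≤ τ → Rbm b m (q j)) :
    ∃ qt : Polynomial (ZMod b), Rbm b m qt ∧
      theta b α d m τ γ p q qt ^ lam ≤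
        (1 / ((b : ℝ) ^ m - 1)) *
          ∑ u ∈ (Finset.Icc 1 τ).powerset,
            (4 : ℝ) ^ (lam * (((blk d (insert (τ + 1) u)).card * (d - α) : ℕ) : ℝ)) *
              γ (blk d (insert (τ + 1) u)) ^ lam * Ctilde b α d lam ^ (u.card + 1) :=
  statement10_general b hb m d α τ hm p hp hdeg γ hγ lam hlam1 hlam2 q

end ISPLR
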